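/- There exist a dimension n, a vector v ∈ ℝⁿ, and a matrix M ∈ ℝ^{n×n} such that the set function f : 2^{{1,…,n}} → ℝ given by f(S) = dist²(v, Range M(S)) is not supermodular. (In particular this holds for n = 3, v = (-1,1,1)ᵀ, and M with rows (1,0,1), (1,1,0), (0,0,1).) -/
import Mathlib


/-- The column of the `n × n` matrix `M` with index `j`, viewed as a vector in
Euclidean space (so that distances are Euclidean `ℓ²` distances). -/
noncomputable def col {n : ℕ} (M : Matrix (Fin n) (Fin n) ℝ) (j : Fin n) :
    EuclideanSpace ℝ (Fin n) :=
  (WithLp.equiv 2 (Fin n → ℝ)).symm fun i => M i j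

/-- `Range M(S)`: the span of the columns of `M` with index in `S`. -/
noncomputable def colSpan {n : ℕ} (M : Matrix (Fin n) (Fin n) ℝ) (S : Set (Fin n)) :
    Submodule ℝ (EuclideanSpace ℝ (Fin n)) :=
  Submodule.span ℝ (col M '' S)

/-- `f(S) = dist²(v, Range M(S))`. -/
noncomputable def distSq {n : ℕ} (v : EuclideanSpace ℝ (Fin n))
    (M : Matrix (Fin n) (Fin n) ℝ) (S : Set (Fin n)) : ℝ :=
  (Metric.infDist v (colSpan M S : Set (EuclideanSpace ℝ (Fin n)))) ^ 2

/-- A set function `f : 2^V → ℝ` is supermodular iff for every `A ⊆ A'` and every `x`,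
`f(A) − f(A ∪ {x}) ≥ f(A') − f(A' ∪ {x})`. -/
def Supermodular {V : Type*} (f : Set V → ℝ) : Prop :=
  ∀ A A' : Set V, A ⊆ A' → ∀ x : V,
    f A - f (A ∪ {x}) ≥ f A' - f (A' ∪ {x})

noncomputable def myv : EuclideanSpace ℝ (Fin 2) := (WithLp.equiv 2 (Fin 2 → ℝ)).symm ![1,1]
def myM : Matrix (Fin 2) (Fin 2) ℝ := !![1,0;-1,1]

lemma myv_apply (i : Fin 2) : myv i = ![1,1] i := rfl

lemma col0 : col myM 0 = (WithLp.equiv 2 (Fin 2 → ℝ)).symm ![1,-1] := by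
  ext i; fin_cases i <;> simp [col, myM]

lemma col1 : col myM 1 = (WithLp.equiv 2 (Fin 2 → ℝ)).symm ![0,1] := by
  ext i; fin_cases i <;> simp [col, myM]

lemma f_empty : distSq myv myM ∅ = 2 := by
  have h : colSpan myM (∅ : Set (Fin 2)) = ⊥ := by simp [colSpan]
  rw [distSq, h]
  have h2 : ((⊥ : Submodule ℝ (EuclideanSpace ℝ (Fin 2))) : Set (EuclideanSpace ℝ (Fin 2)))
      = {0} := by simp
  rw [h2, Metric.infDist_singleton, dist_zero_right, EuclideanSpace.norm_eq,
    Real.sq_sqrt (by positivity)]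
  simp [myv, Fin.sum_univ_two]
  norm_num

lemma f_full : distSq myv myM {0, 1} = 0 := by
  have hmem : myv ∈ colSpan myM {0, 1} := by
    have h1 : col myM 0 ∈ colSpan myM {0, 1} :=
      Submodule.subset_span ⟨0, by simp⟩
    have h2 : col myM 1 ∈ colSpan myM {0, 1} :=
      Submodule.subset_span ⟨1, by simp⟩
    have hv : myv = col myM 0 + (2 : ℝ) • col myM 1 := by
      rw [col0, col1]; ext i; fin_cases i <;>
        simp [myv, PiLp.add_apply, PiLp.smul_apply] <;> norm_num
    rw [hv]
    exact add_mem h1 (Submodule.smul_mem _ _ h2)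
  rw [distSq, Metric.infDist_zero_of_mem hmem]
  norm_num

lemma f_single1 : 1 ≤ distSq myv myM {1} := by
  have hspan : colSpan myM {1} = Submodule.span ℝ {col myM 1} := by
    rw [colSpan, Set.image_singleton]
  have hlb : 1 ≤ Metric.infDist myv (colSpan myM {1} :
      Set (EuclideanSpace ℝ (Fin 2))) := by
    by_contra hlt
    push_neg at hlt
    obtain ⟨y, hy, hdy⟩ := (Metric.infDist_lt_iff ⟨0, Submodule.zero_mem _⟩).mp hlt
    rw [hspan, SetLike.mem_coe, Submodule.mem_span_singleton] at hy
    obtain ⟨a, rfl⟩ := hy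
    have : (1 : ℝ) ≤ dist myv (a • col myM 1) := by
      rw [EuclideanSpace.dist_eq]
      have hterm : dist (myv 0) ((a • col myM 1) 0) ^ 2 = 1 := by
        rw [col1]
        simp [myv, PiLp.smul_apply, Real.dist_eq]
      have hsum : (1:ℝ) ≤ ∑ i, dist (myv i) ((a • col myM 1) i) ^ 2 := by
        rw [Fin.sum_univ_two, hterm]
        have : (0:ℝ) ≤ dist (myv 1) ((a • col myM 1) 1) ^ 2 := by positivity
        linarith
      calc (1:ℝ) = Real.sqrt 1 := by simp
        _ ≤ _ := Real.sqrt_le_sqrt hsum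
    linarith
  calc (1:ℝ) = 1 ^ 2 := by norm_num
    _ ≤ _ := by
        apply pow_le_pow_left₀ (by norm_num) hlb

lemma f_single0 : 2 ≤ distSq myv myM {0} := by
  have hspan : colSpan myM {0} = Submodule.span ℝ {col myM 0} := by
    rw [colSpan, Set.image_singleton]
  have hlb : Real.sqrt 2 ≤ Metric.infDist myv (colSpan myM {0} :
      Set (EuclideanSpace ℝ (Fin 2))) := by
    by_contra hlt
    push_neg at hlt
    obtain ⟨y, hy, hdy⟩ := (Metric.infDist_lt_iff ⟨0, Submodule.zero_mem _⟩).mp hlt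
    rw [hspan, SetLike.mem_coe, Submodule.mem_span_singleton] at hy
    obtain ⟨a, rfl⟩ := hy
    have : Real.sqrt 2 ≤ dist myv (a • col myM 0) := by
      rw [EuclideanSpace.dist_eq]
      apply Real.sqrt_le_sqrt
      rw [Fin.sum_univ_two]
      have h0 : dist (myv 0) ((a • col myM 0) 0) ^ 2 = (1 - a)^2 := by
        rw [col0]; simp [myv, PiLp.smul_apply, Real.dist_eq]
      have h1 : dist (myv 1) ((a • col myM 0) 1) ^ 2 = (1 + a)^2 := by
        rw [col0]; simp [myv, PiLp.smul_apply, Real.dist_eq]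
      rw [h0, h1]; nlinarith [sq_nonneg a]
    linarith
  have h2 : (Real.sqrt 2) ^ 2 = 2 := Real.sq_sqrt (by norm_num)
  calc (2:ℝ) = (Real.sqrt 2) ^ 2 := h2.symm
    _ ≤ _ := pow_le_pow_left₀ (Real.sqrt_nonneg 2) hlb 2

/-- there exist a dimension `n`, a vector `v ∈ ℝⁿ` and a matrix
`M ∈ ℝ^{n×n}` such that `S ↦ dist²(v, Range M(S))` is not supermodular. -/
theorem exists_distSq_not_supermodular :
    ∃ (n : ℕ) (v : EuclideanSpace ℝ (Fin n)) (M : Matrix (Fin n) (Fin n) ℝ),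
      ¬ Supermodular (distSq v M) := by
  refine ⟨2, myv, myM, fun h => ?_⟩
  have key := h ∅ {0} (Set.empty_subset _) 1
  rw [Set.empty_union] at key
  have hunion : ({0} : Set (Fin 2)) ∪ {1} = {0, 1} := rfl
  rw [hunion] at key
  have := f_empty
  have := f_full
  have := f_single1
  have := f_single0
  linarith [key]
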